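/- arXiv:0906.1662 — 3 statements merged into one kernel-verified Lean document; each statement's English description precedes it below -/
import Mathlib

section
/- Let R be a commutative complete local Noetherian ring and let L, M, N be finitely generated R-modules that are pairwise equivalent (i.e., each is a direct sum of copies of the same set of indecomposable modules, with all multiplicities positive). Then the natural composition map Hom_R(M,N) ⊗_{End_R(M)} Hom_R(L,M) → Hom_R(L,N), φ ⊗ ψ ↦ φ∘ψ, is an isomorphism of (End_R(N), End_R(L))-bimodules. -/
open IsLocalRing

/-- Two modules are *equivalent* if they are direct sums of the same finitely many
indecomposable modules, with all multiplicities positive. -/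
def AreEquivalentModules (R : Type) [Ring R] (M N : Type)
    [AddCommGroup M] [Module R M] [AddCommGroup N] [Module R N] : Prop :=
  ∃ (n : ℕ) (L : Fin n → ModuleCat.{0} R) (a b : Fin n → ℕ),
    (∀ i, Nontrivial (L i) ∧
      ∀ p q : Submodule R (L i), IsCompl p q → p = ⊥ ∨ q = ⊥) ∧
    (∀ i, 0 < a i) ∧ (∀ i, 0 < b i) ∧
    Nonempty (M ≃ₗ[R] ((j : Σ i, Fin (a i)) → L j.1)) ∧
    Nonempty (N ≃ₗ[R] ((j : Σ i, Fin (b i)) → L j.1))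

/-- Over a commutative complete local Noetherian ring `R`, for pairwise
equivalent finitely generated modules `L, M, N`, the natural composition map
`Hom_R(M,N) ⊗_{End_R(M)} Hom_R(L,M) → Hom_R(L,N)`, `φ ⊗ ψ ↦ φ ∘ ψ`, is an isomorphism of
`(End_R(N), End_R(L))`-bimodules.  We express this via the universal property of the
balanced tensor product: `(Hom_R(L,N), comp)` satisfies the universal property of
`Hom_R(M,N) ⊗_{End_R(M)} Hom_R(L,M)`; the bimodule actions correspond under composition. -/
theorem composition_is_tensor_of_equivalent
    (R : Type) [CommRing R] [IsNoetherianRing R] [IsLocalRing R]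
    [IsAdicComplete (IsLocalRing.maximalIdeal R) R]
    (L M N : Type) [AddCommGroup L] [Module R L] [AddCommGroup M] [Module R M]
    [AddCommGroup N] [Module R N]
    [Module.Finite R L] [Module.Finite R M] [Module.Finite R N]
    (hLM : AreEquivalentModules R L M) (hMN : AreEquivalentModules R M N)
    (hLN : AreEquivalentModules R L N)
    (A : Type) [AddCommGroup A]
    (β : (M →ₗ[R] N) → (L →ₗ[R] M) → A)
    (hadd₁ : ∀ φ₁ φ₂ ψ, β (φ₁ + φ₂) ψ = β φ₁ ψ + β φ₂ ψ)
    (hadd₂ : ∀ φ ψ₁ ψ₂, β φ (ψ₁ + ψ₂) = β φ ψ₁ + β φ ψ₂)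
    (hbal : ∀ (φ : M →ₗ[R] N) (e : Module.End R M) (ψ : L →ₗ[R] M),
      β (φ ∘ₗ e) ψ = β φ (e ∘ₗ ψ)) :
    ∃! h : (L →ₗ[R] N) →+ A, ∀ φ ψ, h (φ ∘ₗ ψ) = β φ ψ := by
  classical
  obtain ⟨n, Lf, a, c, -, ha, hc, ⟨eL⟩, ⟨eM⟩⟩ := hLM
  set J := (Σ i, Fin (a i)) with hJ
  let ι : ∀ j : J, Lf j.1 →ₗ[R] L := fun j =>
    eL.symm.toLinearMap ∘ₗ LinearMap.single R (fun j : J => Lf j.1) j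
  let π : ∀ j : J, L →ₗ[R] Lf j.1 := fun j =>
    LinearMap.proj j ∘ₗ eL.toLinearMap
  let k0 : J → (Σ i, Fin (c i)) := fun j => ⟨j.1, ⟨0, hc j.1⟩⟩
  let q : ∀ j : J, Lf j.1 →ₗ[R] M := fun j =>
    eM.symm.toLinearMap ∘ₗ LinearMap.single R (fun k : Σ i, Fin (c i) => Lf k.1) (k0 j)
  let p : ∀ j : J, M →ₗ[R] Lf j.1 := fun j =>
    LinearMap.proj (k0 j) ∘ₗ eM.toLinearMap
  have hsumN : ∀ (f : L →ₗ[R] N), ∑ j : J, f ∘ₗ ι j ∘ₗ π j = f := by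
    intro f
    ext x
    rw [LinearMap.sum_apply]
    simp only [LinearMap.comp_apply, ι, π, LinearMap.coe_single,
      LinearEquiv.coe_coe, LinearMap.proj_apply]
    rw [← map_sum f, ← map_sum eL.symm, Finset.univ_sum_single (eL x)]
    simp
  have hsumM : ∀ (g : L →ₗ[R] M), ∑ j : J, g ∘ₗ ι j ∘ₗ π j = g := by
    intro g
    ext x
    rw [LinearMap.sum_apply]
    simp only [LinearMap.comp_apply, ι, π, LinearMap.coe_single,
      LinearEquiv.coe_coe, LinearMap.proj_apply]
    rw [← map_sum g, ← map_sum eL.symm, Finset.univ_sum_single (eL x)]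
    simp
  have hterm : ∀ (f : L →ₗ[R] N) (j : J),
      (f ∘ₗ ι j ∘ₗ p j) ∘ₗ (q j ∘ₗ π j) = f ∘ₗ ι j ∘ₗ π j := by
    intro f j
    ext x
    simp [p, q]
  -- the candidate map
  let h : (L →ₗ[R] N) →+ A := AddMonoidHom.mk'
    (fun f => ∑ j : J, β (f ∘ₗ ι j ∘ₗ p j) (q j ∘ₗ π j))
    (by
      intro f g
      rw [← Finset.sum_add_distrib]
      refine Finset.sum_congr rfl fun j _ => ?_
      rw [LinearMap.add_comp, hadd₁])
  have hval : ∀ (φ : M →ₗ[R] N) (ψ : L →ₗ[R] M), h (φ ∘ₗ ψ) = β φ ψ := by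
    intro φ ψ
    show ∑ j : J, β ((φ ∘ₗ ψ) ∘ₗ ι j ∘ₗ p j) (q j ∘ₗ π j) = β φ ψ
    have step : ∀ j : J, β ((φ ∘ₗ ψ) ∘ₗ ι j ∘ₗ p j) (q j ∘ₗ π j)
        = β φ (ψ ∘ₗ ι j ∘ₗ π j) := by
      intro j
      have h1 : (φ ∘ₗ ψ) ∘ₗ ι j ∘ₗ p j = φ ∘ₗ (ψ ∘ₗ ι j ∘ₗ p j) := by
        ext x; simp
      have h2 : (ψ ∘ₗ ι j ∘ₗ p j) ∘ₗ (q j ∘ₗ π j) = ψ ∘ₗ ι j ∘ₗ π j := by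
        ext x; simp [p, q]
      rw [h1, hbal φ (ψ ∘ₗ ι j ∘ₗ p j) (q j ∘ₗ π j), h2]
    rw [Finset.sum_congr rfl fun j _ => step j]
    let Bφ : (L →ₗ[R] M) →+ A := AddMonoidHom.mk' (β φ) (hadd₂ φ)
    have hBφ : ∑ j : J, β φ (ψ ∘ₗ ι j ∘ₗ π j) = Bφ (∑ j : J, ψ ∘ₗ ι j ∘ₗ π j) := by
      rw [map_sum]; rfl
    rw [hBφ, hsumM ψ]
    rfl
  refine ⟨h, hval, ?_⟩
  intro h' hh'
  ext f
  have hdecomp : f = ∑ j : J, (f ∘ₗ ι j ∘ₗ p j) ∘ₗ (q j ∘ₗ π j) := by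
    rw [Finset.sum_congr rfl fun j _ => hterm f j, hsumN f]
  calc h' f = h' (∑ j : J, (f ∘ₗ ι j ∘ₗ p j) ∘ₗ (q j ∘ₗ π j)) := by rw [← hdecomp]
    _ = ∑ j : J, h' ((f ∘ₗ ι j ∘ₗ p j) ∘ₗ (q j ∘ₗ π j)) := map_sum h' _ _
    _ = ∑ j : J, β (f ∘ₗ ι j ∘ₗ p j) (q j ∘ₗ π j) :=
        Finset.sum_congr rfl fun j _ => hh' _ _
    _ = h f := rfl
end

section
/- Let R be a commutative complete local Noetherian ring and M, N equivalent finitely generated R-modules. Then the natural evaluation map Hom_R(M,N) ⊗_{End_R(M)} M → N is an isomorphism of (End_R(N), R)-bimodules. -/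
open IsLocalRing

/-- Over a commutative complete local Noetherian ring `R`, for equivalent
finitely generated modules `M, N`, the natural evaluation map
`Hom_R(M,N) ⊗_{End_R(M)} M → N`, `φ ⊗ m ↦ φ m`, is an isomorphism of `(End_R(N), R)`-bimodules.
Expressed via the universal property of the balanced tensor product: `(N, eval)` satisfies
the universal property of `Hom_R(M,N) ⊗_{End_R(M)} M`. -/
theorem evaluation_is_tensor_of_equivalent
    (R : Type) [CommRing R] [IsNoetherianRing R] [IsLocalRing R]
    [IsAdicComplete (IsLocalRing.maximalIdeal R) R]
    (M N : Type) [AddCommGroup M] [Module R M] [AddCommGroup N] [Module R N]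
    [Module.Finite R M] [Module.Finite R N]
    (hMN : AreEquivalentModules R M N)
    (A : Type) [AddCommGroup A]
    (β : (M →ₗ[R] N) → M → A)
    (hadd₁ : ∀ φ₁ φ₂ m, β (φ₁ + φ₂) m = β φ₁ m + β φ₂ m)
    (hadd₂ : ∀ φ m₁ m₂, β φ (m₁ + m₂) = β φ m₁ + β φ m₂)
    (hbal : ∀ (φ : M →ₗ[R] N) (e : Module.End R M) (m : M),
      β (φ ∘ₗ e) m = β φ (e m)) :
    ∃! h : N →+ A, ∀ (φ : M →ₗ[R] N) (m : M), h (φ m) = β φ m := by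
  classical
  obtain ⟨n, L, a, b, -, ha, hb, ⟨eM⟩, ⟨eN⟩⟩ := hMN
  -- additive-in-φ bundled version of β
  let B : M → ((M →ₗ[R] N) →+ A) := fun m =>
    AddMonoidHom.mk' (fun φ => β φ m) (fun φ₁ φ₂ => hadd₁ φ₁ φ₂ m)
  let z : ∀ i, Fin (a i) := fun i => ⟨0, ha i⟩
  let P : (Σ i : Fin n, Fin (b i)) → (M →ₗ[R] N) := fun j =>
    eN.symm.toLinearMap ∘ₗ LinearMap.single R (fun j' : Σ i, Fin (b i) => L j'.1) j ∘ₗ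
      LinearMap.proj (⟨j.1, z j.1⟩ : Σ i, Fin (a i)) ∘ₗ eM.toLinearMap
  let S : (Σ i : Fin n, Fin (b i)) → (N →ₗ[R] M) := fun j =>
    eM.symm.toLinearMap ∘ₗ LinearMap.single R (fun j' : Σ i, Fin (a i) => L j'.1)
      (⟨j.1, z j.1⟩ : Σ i, Fin (a i)) ∘ₗ LinearMap.proj j ∘ₗ eN.toLinearMap
  have hPS : ∀ (j) (x : N), P j (S j x) = eN.symm (Pi.single j (eN x j)) := by
    intro j x
    simp [P, S, LinearMap.single_apply, Pi.single_eq_same]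
  have key : ∀ x : N, ∑ j, P j (S j x) = x := by
    intro x
    rw [Finset.sum_congr rfl (fun j _ => hPS j x), ← map_sum]
    simp [Finset.univ_sum_single]
  refine ⟨AddMonoidHom.mk' (fun x => ∑ j, β (P j) (S j x)) ?_, ?_, ?_⟩
  · intro x y
    rw [← Finset.sum_add_distrib]
    exact Finset.sum_congr rfl fun j _ => by rw [map_add, hadd₂]
  · intro φ m
    simp only [AddMonoidHom.mk'_apply]
    have h1 : ∀ j, β (P j) (S j (φ m)) = β (P j ∘ₗ (S j ∘ₗ φ)) m := fun j =>
      (hbal (P j) (S j ∘ₗ φ) m).symm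
    rw [Finset.sum_congr rfl fun j _ => h1 j]
    have h2 : (∑ j, P j ∘ₗ (S j ∘ₗ φ)) = φ := by
      ext m'
      simp only [LinearMap.coe_sum, Finset.sum_apply, LinearMap.comp_apply]
      exact key (φ m')
    calc ∑ j, β (P j ∘ₗ (S j ∘ₗ φ)) m = B m (∑ j, P j ∘ₗ (S j ∘ₗ φ)) := (map_sum (B m) _ _).symm
      _ = β φ m := by rw [h2]; rfl
  · intro h' hh'
    ext x
    simp only [AddMonoidHom.mk'_apply]
    conv_lhs => rw [← key x]
    rw [map_sum]
    exact Finset.sum_congr rfl fun j _ => hh' (P j) (S j x)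
end

section
/- Let R be a commutative complete local Noetherian ring and M, N equivalent finitely generated R-modules. Then Hom_R(M,N) ⊗_{End_R(M)} Hom_R(N,M) ≅ End_R(N) as (End_R(N), End_R(N))-bimodules, via composition. -/
open IsLocalRing

private lemma comp_sum_aux {R : Type} [CommRing R] {M N P : Type} [AddCommGroup M]
    [AddCommGroup N] [AddCommGroup P] [Module R M] [Module R N] [Module R P]
    {ι : Type} (s : Finset ι) (f : ι → (M →ₗ[R] N)) (g : N →ₗ[R] P) :
    g ∘ₗ (∑ i ∈ s, f i) = ∑ i ∈ s, g ∘ₗ f i := by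
  ext x
  simp [LinearMap.sum_apply, map_sum]

/-- Over a commutative complete local Noetherian ring `R`, for equivalent
finitely generated modules `M, N`, composition induces an isomorphism
`Hom_R(M,N) ⊗_{End_R(M)} Hom_R(N,M) ≅ End_R(N)` of `(End_R(N), End_R(N))`-bimodules.
Expressed via the universal property of the balanced tensor product: `(End_R(N), comp)`
satisfies the universal property of `Hom_R(M,N) ⊗_{End_R(M)} Hom_R(N,M)`. -/
theorem composition_gives_end_of_equivalent
    (R : Type) [CommRing R] [IsNoetherianRing R] [IsLocalRing R]
    [IsAdicComplete (IsLocalRing.maximalIdeal R) R]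
    (M N : Type) [AddCommGroup M] [Module R M] [AddCommGroup N] [Module R N]
    [Module.Finite R M] [Module.Finite R N]
    (hMN : AreEquivalentModules R M N)
    (A : Type) [AddCommGroup A]
    (β : (M →ₗ[R] N) → (N →ₗ[R] M) → A)
    (hadd₁ : ∀ φ₁ φ₂ ψ, β (φ₁ + φ₂) ψ = β φ₁ ψ + β φ₂ ψ)
    (hadd₂ : ∀ φ ψ₁ ψ₂, β φ (ψ₁ + ψ₂) = β φ ψ₁ + β φ ψ₂)
    (hbal : ∀ (φ : M →ₗ[R] N) (e : Module.End R M) (ψ : N →ₗ[R] M),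
      β (φ ∘ₗ e) ψ = β φ (e ∘ₗ ψ)) :
    ∃! h : Module.End R N →+ A, ∀ (φ : M →ₗ[R] N) (ψ : N →ₗ[R] M), h (φ ∘ₗ ψ) = β φ ψ := by
  classical
  obtain ⟨n, L, a, b, -, ha, -, ⟨eM⟩, ⟨eN⟩⟩ := hMN
  -- index types
  -- projections/inclusions realizing id_N as a sum of compositions through M
  let φ : (Σ i, Fin (b i)) → (M →ₗ[R] N) := fun j =>
    eN.symm.toLinearMap ∘ₗ LinearMap.single R (fun j' : Σ i, Fin (b i) => L j'.1) j ∘ₗ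
      LinearMap.proj (φ := fun j' : Σ i, Fin (a i) => L j'.1) ⟨j.1, ⟨0, ha j.1⟩⟩ ∘ₗ
      eM.toLinearMap
  let ψ : (Σ i, Fin (b i)) → (N →ₗ[R] M) := fun j =>
    eM.symm.toLinearMap ∘ₗ
      LinearMap.single R (fun j' : Σ i, Fin (a i) => L j'.1) ⟨j.1, ⟨0, ha j.1⟩⟩ ∘ₗ
      LinearMap.proj (φ := fun j' : Σ i, Fin (b i) => L j'.1) j ∘ₗ eN.toLinearMap
  have key : ∑ j : Σ i, Fin (b i), φ j ∘ₗ ψ j = LinearMap.id := by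
    ext x
    have : ∀ j : Σ i, Fin (b i), (φ j ∘ₗ ψ j) x = eN.symm (Pi.single j ((eN x) j)) := by
      intro j
      simp [φ, ψ, LinearMap.proj, Pi.single_eq_same]
    simp only [LinearMap.sum_apply, this, LinearMap.id_apply]
    rw [← map_sum, Finset.univ_sum_single]
    exact eN.symm_apply_apply x
  -- the candidate homomorphism
  let h : Module.End R N →+ A := AddMonoidHom.mk'
    (fun e => ∑ j : Σ i, Fin (b i), β (e ∘ₗ φ j) (ψ j))
    (fun e e' => by
      rw [← Finset.sum_add_distrib]
      refine Finset.sum_congr rfl fun j _ => ?_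
      rw [show (e + e') ∘ₗ φ j = e ∘ₗ φ j + e' ∘ₗ φ j from LinearMap.add_comp _ _ _, hadd₁])
  have hβ : ∀ (φ₀ : M →ₗ[R] N), ∃ B : (N →ₗ[R] M) →+ A, ∀ ψ₀, B ψ₀ = β φ₀ ψ₀ :=
    fun φ₀ => ⟨AddMonoidHom.mk' (β φ₀) (hadd₂ φ₀), fun _ => rfl⟩
  have hprop : ∀ (φ₀ : M →ₗ[R] N) (ψ₀ : N →ₗ[R] M), h (φ₀ ∘ₗ ψ₀) = β φ₀ ψ₀ := by
    intro φ₀ ψ₀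
    obtain ⟨B, hB⟩ := hβ φ₀
    show ∑ j : Σ i, Fin (b i), β ((φ₀ ∘ₗ ψ₀) ∘ₗ φ j) (ψ j) = β φ₀ ψ₀
    have step : ∀ j : Σ i, Fin (b i),
        β ((φ₀ ∘ₗ ψ₀) ∘ₗ φ j) (ψ j) = B (ψ₀ ∘ₗ (φ j ∘ₗ ψ j)) := by
      intro j
      rw [LinearMap.comp_assoc, hbal, hB, LinearMap.comp_assoc]
    rw [Finset.sum_congr rfl fun j _ => step j, ← map_sum, ← comp_sum_aux, key]
    simpa using hB ψ₀
  refine ⟨h, hprop, ?_⟩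
  intro h' hh'
  ext e
  have : e = ∑ j : Σ i, Fin (b i), (e ∘ₗ φ j) ∘ₗ ψ j := by
    rw [Finset.sum_congr rfl fun j _ => (LinearMap.comp_assoc _ _ _),
      ← comp_sum_aux, key]
    rfl
  calc h' e = h' (∑ j : Σ i, Fin (b i), (e ∘ₗ φ j) ∘ₗ ψ j) := by rw [← this]
    _ = ∑ j : Σ i, Fin (b i), β (e ∘ₗ φ j) (ψ j) := by
        rw [map_sum]; exact Finset.sum_congr rfl fun j _ => hh' _ _
    _ = h e := rfl
end
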